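/- Let ∇ ⊂ ℝ⁴ be defined by 0 ≤ x ≤ 1, 0 ≤ y ≤ 1, 0 ≤ z ≤ 1, w ≥ 0, y+z-x ≥ 0, 1+x-y-z-w ≥ 0. For every positive integer n, the number of lattice points in n∇ equals C(n+4,4) + 4·C(n+3,4) + 3·C(n+2,4) = (8n⁴ + 40n³ + 76n² + 68n + 24)/24. -/

import Mathlib

/-!
The lattice points of `n∇` fibre over the lattice points `(x, y, z)` of its projection `B`, the
fibre over `(x, y, z)` having `n + 1 - (y + z - x)` points. The point reflection
`p ↦ (n, n, n) - p` preserves `B` and replaces `y + z - x` by `n - (y + z - x)`, so twice the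
number of lattice points is `(n + 2) * #B`. Fibring `B` over `(x, y)` gives
`#B = ∑ (n + 1 - |x - y|) = (n + 1)³ - n (n + 1) (n + 2) / 3`,
whence the count `(n + 1) (n + 2) (2n² + 4n + 3) / 6`.
-/

open Pointwise

def nabla : Set (ℝ × ℝ × ℝ × ℝ) :=
  {p : ℝ × ℝ × ℝ × ℝ |
    0 ≤ p.1 ∧
    p.1 ≤ 1 ∧
    0 ≤ p.2.1 ∧
    p.2.1 ≤ 1 ∧
    0 ≤ p.2.2.1 ∧
    p.2.2.1 ≤ 1 ∧
    0 ≤ p.2.2.2 ∧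
    0 ≤ p.2.1 + p.2.2.1 - p.1 ∧
    0 ≤ 1 + p.1 - p.2.1 - p.2.2.1 - p.2.2.2}

open Finset

theorem mem_smul_nabla_iff {t : ℝ} (ht : 0 ≤ t) {x y z w : ℝ} :
    (x, y, z, w) ∈ t • nabla ↔
      0 ≤ x ∧ x ≤ t ∧ 0 ≤ y ∧ y ≤ t ∧ 0 ≤ z ∧ z ≤ t ∧ 0 ≤ w ∧ x ≤ y + z ∧ y + z + w ≤ t + x := by
  rcases ht.eq_or_lt with rfl | ht
  · have h0 : (0 : ℝ × ℝ × ℝ × ℝ) ∈ nabla := by norm_num [nabla]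
    rw [Set.zero_smul_set ⟨0, h0⟩, Set.mem_zero]
    simp only [Prod.mk_eq_zero]
    constructor
    · rintro ⟨rfl, rfl, rfl, rfl⟩
      norm_num
    · rintro ⟨_, _, _, _, _, _, _, _, _⟩
      refine ⟨?_, ?_, ?_, ?_⟩ <;> linarith
  · rw [Set.mem_smul_set_iff_inv_smul_mem₀ ht.ne']
    obtain ⟨x, rfl⟩ : ∃ x', x = t * x' := ⟨t⁻¹ * x, by field_simp⟩
    obtain ⟨y, rfl⟩ : ∃ y', y = t * y' := ⟨t⁻¹ * y, by field_simp⟩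
    obtain ⟨z, rfl⟩ : ∃ z', z = t * z' := ⟨t⁻¹ * z, by field_simp⟩
    obtain ⟨w, rfl⟩ : ∃ w', w = t * w' := ⟨t⁻¹ * w, by field_simp⟩
    simp only [Prod.smul_mk, smul_eq_mul, inv_mul_cancel_left₀ ht.ne', nabla, Set.mem_ofPred_eq]
    constructor
    · rintro ⟨_, _, _, _, _, _, _, _, _⟩
      refine ⟨?_, ?_, ?_, ?_, ?_, ?_, ?_, ?_, ?_⟩ <;> nlinarith
    · rintro ⟨_, _, _, _, _, _, _, _, _⟩
      refine ⟨?_, ?_, ?_, ?_, ?_, ?_, ?_, ?_, ?_⟩ <;> nlinarith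

def nablaBase (n : ℕ) : Finset (ℕ × ℕ × ℕ) :=
  (range (n + 1) ×ˢ range (n + 1) ×ˢ range (n + 1)).filter
    fun p => p.1 ≤ p.2.1 + p.2.2 ∧ p.2.1 + p.2.2 ≤ n + p.1

theorem mem_nablaBase {n x y z : ℕ} :
    (x, y, z) ∈ nablaBase n ↔ x ≤ n ∧ y ≤ n ∧ z ≤ n ∧ x ≤ y + z ∧ y + z ≤ n + x := by
  simp only [nablaBase, mem_filter, mem_product, mem_range]
  omega

def nablaHeight (n : ℕ) (p : ℕ × ℕ × ℕ) : ℕ := n + p.1 + 1 - (p.2.1 + p.2.2)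

def nablaPoints (n : ℕ) : Finset (Σ _ : ℕ × ℕ × ℕ, ℕ) :=
  (nablaBase n).sigma fun p => range (nablaHeight n p)

def toIntPoint (q : Σ _ : ℕ × ℕ × ℕ, ℕ) : ℤ × ℤ × ℤ × ℤ := (q.1.1, q.1.2.1, q.1.2.2, q.2)

theorem toIntPoint_injective : Function.Injective toIntPoint := by
  rintro ⟨⟨x, y, z⟩, w⟩ ⟨⟨x', y', z'⟩, w'⟩ h
  simp only [toIntPoint, Prod.mk.injEq, Nat.cast_inj] at h
  obtain ⟨rfl, rfl, rfl, rfl⟩ := h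
  rfl

theorem lattice_smul_nabla_eq_image (n : ℕ) :
    {v : ℤ × ℤ × ℤ × ℤ |
      ((v.1 : ℝ), (v.2.1 : ℝ), (v.2.2.1 : ℝ), (v.2.2.2 : ℝ)) ∈ (n : ℝ) • nabla} =
      toIntPoint '' nablaPoints n := by
  ext ⟨x, y, z, w⟩
  simp only [Set.mem_ofPred_eq, mem_smul_nabla_iff n.cast_nonneg, Set.mem_image, mem_coe,
    nablaPoints, mem_sigma, Sigma.exists, Prod.exists, mem_nablaBase, nablaHeight, mem_range,
    toIntPoint, Prod.mk.injEq]
  norm_cast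
  constructor
  · rintro ⟨_, _, _, _, _, _, _, _, _⟩
    refine ⟨x.toNat, y.toNat, z.toNat, w.toNat, ?_, ?_⟩ <;> omega
  · rintro ⟨a, b, c, d, ⟨⟨_, _, _, _, _⟩, _⟩, rfl, rfl, rfl, rfl⟩
    omega

theorem ncard_lattice_smul_nabla (n : ℕ) :
    {v : ℤ × ℤ × ℤ × ℤ |
      ((v.1 : ℝ), (v.2.1 : ℝ), (v.2.2.1 : ℝ), (v.2.2.2 : ℝ)) ∈ (n : ℝ) • nabla}.ncard =
      ∑ p ∈ nablaBase n, nablaHeight n p := by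
  rw [lattice_smul_nabla_eq_image, Set.ncard_image_of_injective _ toIntPoint_injective,
    Set.ncard_coe_finset, nablaPoints, card_sigma]
  simp only [card_range]

theorem sum_nablaHeight_reflect (n : ℕ) :
    ∑ p ∈ nablaBase n, nablaHeight n (n - p.1, n - p.2.1, n - p.2.2) =
      ∑ p ∈ nablaBase n, nablaHeight n p := by
  refine sum_nbij' (fun p => (n - p.1, n - p.2.1, n - p.2.2))
    (fun p => (n - p.1, n - p.2.1, n - p.2.2)) ?_ ?_ ?_ ?_ fun _ _ => rfl
  all_goals
    rintro ⟨x, y, z⟩ h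
    simp only [mem_nablaBase, Prod.mk.injEq] at h ⊢
    omega

theorem two_mul_sum_nablaHeight (n : ℕ) :
    2 * ∑ p ∈ nablaBase n, nablaHeight n p = (n + 2) * #(nablaBase n) := by
  rw [two_mul]
  nth_rw 1 [← sum_nablaHeight_reflect]
  rw [← sum_add_distrib, card_eq_sum_ones, mul_sum, mul_one]
  refine sum_congr rfl ?_
  rintro ⟨x, y, z⟩ h
  rw [mem_nablaBase] at h
  simp only [nablaHeight]
  omega

theorem card_filter_range_add_dist {n x y : ℕ} (hx : x ≤ n) (hy : y ≤ n) :
    #{z ∈ range (n + 1) | x ≤ y + z ∧ y + z ≤ n + x} + Nat.dist x y = n + 1 := by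
  have h : {z ∈ range (n + 1) | x ≤ y + z ∧ y + z ≤ n + x} = Ico (x - y) (n + 1 - (y - x)) := by
    ext z
    simp only [mem_filter, mem_range, mem_Ico]
    omega
  rw [h, Nat.card_Ico, Nat.dist]
  omega

theorem card_nablaBase_add_sum_dist (n : ℕ) :
    #(nablaBase n) + ∑ x ∈ range (n + 1), ∑ y ∈ range (n + 1), Nat.dist x y = (n + 1) ^ 3 := by
  have h : #(nablaBase n) = ∑ x ∈ range (n + 1), ∑ y ∈ range (n + 1),
      #{z ∈ range (n + 1) | x ≤ y + z ∧ y + z ≤ n + x} := by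
    simp only [nablaBase, card_filter, sum_product]
  rw [h, ← sum_add_distrib]
  calc _ = ∑ x ∈ range (n + 1), ∑ y ∈ range (n + 1), (n + 1) := by
        refine sum_congr rfl fun x hx => ?_
        rw [← sum_add_distrib]
        refine sum_congr rfl fun y hy => ?_
        rw [mem_range] at hx hy
        exact card_filter_range_add_dist (by omega) (by omega)
    _ = (n + 1) ^ 3 := by simp only [sum_const, card_range, smul_eq_mul]; ring

theorem two_mul_sum_range_sub (m : ℕ) : 2 * ∑ y ∈ range m, (m - y) = m * (m + 1) := by
  induction m with
  | zero => simp
  | succ m ih =>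
    rw [sum_range_succ', mul_add, mul_sum]
    simp only [Nat.add_sub_add_right, Nat.sub_zero]
    rw [← mul_sum, ih]
    ring

theorem three_mul_sum_sum_dist (n : ℕ) :
    3 * ∑ x ∈ range (n + 1), ∑ y ∈ range (n + 1), Nat.dist x y = n * (n + 1) * (n + 2) := by
  induction n with
  | zero => simp [Nat.dist_self]
  | succ n ih =>
    have hrow : ∑ y ∈ range (n + 1), Nat.dist (n + 1) y = ∑ y ∈ range (n + 1), (n + 1 - y) :=
      sum_congr rfl fun y hy => Nat.dist_eq_sub_of_le_right (by simp at hy; omega)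
    have hcol : ∑ x ∈ range (n + 1), Nat.dist x (n + 1) = ∑ y ∈ range (n + 1), (n + 1 - y) :=
      sum_congr rfl fun x hx => Nat.dist_eq_sub_of_le (by simp at hx; omega)
    simp only [sum_range_succ _ (n + 1), sum_add_distrib, Nat.dist_self, hrow, hcol]
    linear_combination ih + 3 * two_mul_sum_range_sub (n + 1)

theorem cast_sum_nablaHeight (n : ℕ) :
    ((∑ p ∈ nablaBase n, nablaHeight n p : ℕ) : ℚ) =
      (n + 1) * (n + 2) * (2 * n ^ 2 + 4 * n + 3) / 6 := by
  have hheight : (2 * ∑ p ∈ nablaBase n, nablaHeight n p : ℚ) = (n + 2) * #(nablaBase n) := by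
    exact_mod_cast two_mul_sum_nablaHeight n
  have hbase := card_nablaBase_add_sum_dist n
  have hdist := three_mul_sum_sum_dist n
  qify at hbase hdist
  push_cast at hheight ⊢
  linear_combination (1 / 2 : ℚ) * hheight + (1 / 2 : ℚ) * (n + 2) * hbase -
    (1 / 6 : ℚ) * (n + 2) * hdist

theorem Nat.cast_choose_four {K : Type*} [Field K] [CharZero K] (m : ℕ) :
    (m.choose 4 : K) = m * (m - 1) * (m - 2) * (m - 3) / 24 := by
  rw [Nat.cast_choose_eq_descPochhammer_div]
  simp [descPochhammer_succ_right, Nat.factorial]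

theorem stmt18_general (n : ℕ) :
    {v : ℤ × ℤ × ℤ × ℤ | (((v.1 : ℝ), (v.2.1 : ℝ), (v.2.2.1 : ℝ), (v.2.2.2 : ℝ)) : ℝ × ℝ × ℝ × ℝ) ∈ (n : ℝ) • nabla}.ncard
        = Nat.choose (n + 4) 4 + 4 * Nat.choose (n + 3) 4 + 3 * Nat.choose (n + 2) 4 ∧
      ((Nat.choose (n + 4) 4 + 4 * Nat.choose (n + 3) 4 + 3 * Nat.choose (n + 2) 4 : ℚ))
        = (8 * (n : ℚ) ^ 4 + 40 * (n : ℚ) ^ 3 + 76 * (n : ℚ) ^ 2 + 68 * (n : ℚ) ^ 1 + 24) / 24 := by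
  have hchoose : (Nat.choose (n + 4) 4 + 4 * Nat.choose (n + 3) 4 + 3 * Nat.choose (n + 2) 4 : ℚ) =
      (n + 1) * (n + 2) * (2 * n ^ 2 + 4 * n + 3) / 6 := by
    simp only [Nat.cast_choose_four]
    push_cast
    ring
  refine ⟨?_, by rw [hchoose]; ring⟩
  rw [ncard_lattice_smul_nabla]
  exact_mod_cast (cast_sum_nablaHeight n).trans hchoose.symm

theorem stmt18 (n : ℕ) (hn : 0 < n) :
    {v : ℤ × ℤ × ℤ × ℤ | (((v.1 : ℝ), (v.2.1 : ℝ), (v.2.2.1 : ℝ), (v.2.2.2 : ℝ)) : ℝ × ℝ × ℝ × ℝ) ∈ (n : ℝ) • nabla}.ncard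
        = Nat.choose (n + 4) 4 + 4 * Nat.choose (n + 3) 4 + 3 * Nat.choose (n + 2) 4 ∧
      ((Nat.choose (n + 4) 4 + 4 * Nat.choose (n + 3) 4 + 3 * Nat.choose (n + 2) 4 : ℚ))
        = (8 * (n : ℚ) ^ 4 + 40 * (n : ℚ) ^ 3 + 76 * (n : ℚ) ^ 2 + 68 * (n : ℚ) ^ 1 + 24) / 24 :=
  stmt18_general n
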